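/- Let G be a finite group, g ∈ G, [g] its conjugacy class, and C the centralizer of g in G. Let (U, ρ) be a complex linear representation of G equipped with a direct-sum decomposition U = ⊕_{h∈[g]} V_h such that ρ(f)(V_h) = V_{f h f^{−1}} for all f ∈ G and h ∈ [g]. Then the subgroup C preserves V_g, and the composition V_g ↪ U ↠ U_G induces an isomorphism of vector spaces (V_g)_C ≅ U_G, where U_G = U / span{ρ(f)(u) − u : f ∈ G, u ∈ U} and (V_g)_C = V_g / span{ρ(c)(v) − v : c ∈ C, v ∈ V_g} are the spaces of coinvariants. -/

import Mathlib

/-!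
The group `G` permutes the summands `V_h` transitively, and the stabilizer of `V_g` is the
centralizer `C`; so `U` is induced from the `C`-representation `V_g`, and the statement is
Shapiro's lemma in degree zero. Concretely, pick for every `h` some `f` with `f g f⁻¹ = h`; the maps
`V_h → (V_g)_C, u ↦ [ρ(f)⁻¹ u]` do not depend on the choice of `f`, so they assemble to a
`G`-invariant map `U → (V_g)_C`, which is inverse to the map `(V_g)_C → U_G` induced by inclusion.
-/

/-- Conjugation of an element of the conjugacy class of `g` by `f`. -/
def conjClassConj {G : Type} [Group G] (g : G) (f : G) (h : {h : G // IsConj g h}) :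
    {h : G // IsConj g h} :=
  ⟨f * h.1 * f⁻¹, h.2.trans (isConj_iff.mpr ⟨f, rfl⟩)⟩

open Submodule MulAction

theorem LinearMap.ext_of_iSup_eq_top {R M N ι : Type*} [Semiring R] [AddCommMonoid M]
    [Module R M] [AddCommMonoid N] [Module R N] {p : ι → Submodule R M} (hp : ⨆ i, p i = ⊤)
    {φ ψ : M →ₗ[R] N} (h : ∀ i, ∀ x ∈ p i, φ x = ψ x) : φ = ψ :=
  LinearMap.ext_on (by rwa [← iSup_eq_span]) fun x hx => by
    obtain ⟨i, hi⟩ := Set.mem_iUnion.mp hx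
    exact h i x hi

namespace Representation

variable {k G U : Type*} [CommRing k] [Group G] [AddCommGroup U] [Module k U]

theorem Coinvariants.ker_eq_span (ρ : Representation k G U) :
    Coinvariants.ker ρ = span k {x | ∃ (f : G) (u : U), x = ρ f u - u} := by
  simp only [Coinvariants.ker, Set.range, Prod.exists, eq_comm]

theorem Coinvariants.ker_subrepresentation_comp_subtype (ρ : Representation k G U)
    (S : Subgroup G) (W : Submodule k U) (hW : ∀ c, W ≤ W.comap (ρ.comp S.subtype c)) :
    Coinvariants.ker (subrepresentation (ρ.comp S.subtype) W hW) =
      (span k {x | ∃ c ∈ S, ∃ w ∈ W, x = ρ c w - w}).comap W.subtype := by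
  apply map_injective_of_injective W.injective_subtype
  rw [map_comap_subtype, inf_eq_right.mpr, Coinvariants.ker, map_span]
  · congr 1
    ext x
    constructor
    · rintro ⟨_, ⟨⟨c, w⟩, rfl⟩, rfl⟩
      exact ⟨c, c.2, w, w.2, rfl⟩
    · rintro ⟨c, hc, w, hw, rfl⟩
      exact ⟨_, ⟨(⟨c, hc⟩, ⟨w, hw⟩), rfl⟩, rfl⟩
  · rw [span_le]
    rintro _ ⟨c, hc, w, hw, rfl⟩
    exact W.sub_mem (hW ⟨c, hc⟩ hw) hw

section Summands

variable {ι : Type*} [MulAction G ι] (ρ : Representation k G U) {V : ι → Submodule k U}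
  (hρV : ∀ (f : G) (i : ι), ∀ u ∈ V i, ρ f u ∈ V (f • i))

noncomputable def stabilizerSummand (i : ι) : Representation k (stabilizer G i) (V i) :=
  subrepresentation (ρ.comp (stabilizer G i).subtype) (V i) fun c u hu => by
    have h := hρV c i u hu
    rw [mem_stabilizer_iff.mp c.2] at h
    exact h

theorem stabilizerSummand_apply {i : ι} (c : stabilizer G i) (v : V i) :
    (stabilizerSummand ρ hρV i c v : U) = ρ c v :=
  rfl

variable {ρ} (i₀ : ι)

include hρV in
theorem inv_apply_mem_of_smul_eq {i : ι} {f : G} (hf : f • i₀ = i) {u : U} (hu : u ∈ V i) :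
    ρ f⁻¹ u ∈ V i₀ := by
  simpa only [← hf, inv_smul_smul] using hρV f⁻¹ i u hu

noncomputable def summandTransport {i : ι} (f : G) (hf : f • i₀ = i) :
    V i →ₗ[k] Coinvariants (stabilizerSummand ρ hρV i₀) :=
  Coinvariants.mk _ ∘ₗ (ρ f⁻¹).restrict fun _ => inv_apply_mem_of_smul_eq hρV i₀ hf

theorem summandTransport_apply {i : ι} (f : G) (hf : f • i₀ = i) (u : V i) :
    summandTransport hρV i₀ f hf u =
      Coinvariants.mk _ ⟨ρ f⁻¹ u, inv_apply_mem_of_smul_eq hρV i₀ hf u.2⟩ :=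
  rfl

/-- Two choices of `f` differ by an element of the stabilizer, which acts trivially on the
coinvariants. -/
theorem summandTransport_eq {i : ι} {f f' : G} (hf : f • i₀ = i) (hf' : f' • i₀ = i) :
    summandTransport hρV i₀ f hf = summandTransport hρV i₀ f' hf' := by
  ext u
  have hc : f'⁻¹ * f ∈ stabilizer G i₀ := by
    rw [mem_stabilizer_iff, mul_smul, hf, ← hf', inv_smul_smul]
  rw [summandTransport_apply, summandTransport_apply,
    ← Coinvariants.mk_self_apply _ ⟨_, hc⟩]
  congr 1
  ext
  rw [stabilizerSummand_apply, map_mul, Module.End.mul_apply, self_inv_apply]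

variable [DecidableEq ι] [IsPretransitive G ι] (hV : DirectSum.IsInternal V)

noncomputable def summandRetraction : U →ₗ[k] Coinvariants (stabilizerSummand ρ hρV i₀) :=
  DirectSum.toModule k ι _
      (fun i => summandTransport hρV i₀ _ (exists_smul_eq G i₀ i).choose_spec) ∘ₗ
    (LinearEquiv.ofBijective (DirectSum.coeLinearMap V) hV).symm.toLinearMap

theorem summandRetraction_apply {i : ι} {u : U} (hu : u ∈ V i) {f : G} (hf : f • i₀ = i) :
    summandRetraction hρV i₀ hV u = summandTransport hρV i₀ f hf ⟨u, hu⟩ := by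
  have hdecomp : (LinearEquiv.ofBijective (DirectSum.coeLinearMap V) hV).symm u =
      DirectSum.lof k ι (fun i => V i) i ⟨u, hu⟩ := by
    rw [LinearEquiv.symm_apply_eq]
    exact (DirectSum.coeLinearMap_lof V i ⟨u, hu⟩).symm
  simp only [summandRetraction, LinearMap.comp_apply, LinearEquiv.coe_coe, hdecomp,
    DirectSum.toModule_lof, summandTransport_eq hρV i₀ _ hf]

theorem summandRetraction_comp (f : G) :
    summandRetraction hρV i₀ hV ∘ₗ ρ f = summandRetraction hρV i₀ hV := by
  refine LinearMap.ext_of_iSup_eq_top hV.submodule_iSup_eq_top fun i u hu => ?_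
  obtain ⟨σ, hσ⟩ := exists_smul_eq G i₀ i
  have hfσ : (f * σ) • i₀ = f • i := by rw [mul_smul, hσ]
  rw [LinearMap.comp_apply, summandRetraction_apply hρV i₀ hV (hρV f i u hu) hfσ,
    summandRetraction_apply hρV i₀ hV hu hσ, summandTransport_apply,
    summandTransport_apply]
  simp only [mul_inv_rev, map_mul, Module.End.mul_apply, inv_self_apply]

noncomputable def stabilizerSummandCoinvariantsLEquiv :
    Coinvariants (stabilizerSummand ρ hρV i₀) ≃ₗ[k] Coinvariants ρ :=
  LinearEquiv.ofLinearMap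
    (Coinvariants.lift _ (Coinvariants.mk ρ ∘ₗ (V i₀).subtype) fun c => by
      ext v
      exact Coinvariants.mk_self_apply ρ c v)
    (Coinvariants.lift ρ _ (summandRetraction_comp hρV i₀ hV))
    (Coinvariants.hom_ext <| LinearMap.ext_of_iSup_eq_top hV.submodule_iSup_eq_top
      fun i u hu => by
        obtain ⟨σ, hσ⟩ := exists_smul_eq G i₀ i
        simp only [LinearMap.comp_apply, Coinvariants.lift_mk,
          summandRetraction_apply hρV i₀ hV hu hσ, summandTransport_apply,
          LinearMap.id_apply, Submodule.subtype_apply, Coinvariants.mk_self_apply])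
    (Coinvariants.hom_ext <| LinearMap.ext fun v => by
      simp only [LinearMap.comp_apply, Coinvariants.lift_mk, Submodule.subtype_apply,
        summandRetraction_apply hρV i₀ hV v.2 (one_smul G i₀), summandTransport_apply,
        inv_one, map_one, Module.End.one_apply, LinearMap.id_apply])

end Summands

end Representation

open Representation

instance {G : Type} [Group G] (g : G) : MulAction G {h : G // IsConj g h} where
  smul := conjClassConj g
  one_smul h := Subtype.ext <| show 1 * h.1 * 1⁻¹ = h.1 by group
  mul_smul f f' h := Subtype.ext <|
    show f * f' * h.1 * (f * f')⁻¹ = f * (f' * h.1 * f'⁻¹) * f⁻¹ by group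

instance {G : Type} [Group G] (g : G) : IsPretransitive G {h : G // IsConj g h} :=
  ⟨fun x y => by
    obtain ⟨c, hc⟩ := isConj_iff.mp (x.2.symm.trans y.2)
    exact ⟨c, Subtype.ext hc⟩⟩

theorem stabilizer_conjClass_self_eq_centralizer {G : Type} [Group G] (g : G) :
    stabilizer G (⟨g, .refl g⟩ : {h : G // IsConj g h}) = Subgroup.centralizer {g} := by
  ext c
  rw [mem_stabilizer_iff, Subgroup.mem_centralizer_singleton_iff, Subtype.ext_iff]
  exact mul_inv_eq_iff_eq_mul

theorem coinvariants_of_conjugacy_class_decomposition_general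
    (G : Type) [Group G] (g : G)
    (U : Type) [AddCommGroup U] [Module ℂ U] (ρ : Representation ℂ G U)
    -- a direct sum decomposition U = ⊕_{h ∈ [g]} V_h …
    (V : {h : G // IsConj g h} → Submodule ℂ U)
    (hIndep : iSupIndep V)
    (hSpan : ⨆ h : {h : G // IsConj g h}, V h = ⊤)
    -- … permuted by G according to conjugation: ρ(f)(V_h) = V_{f h f⁻¹}
    (hConj : ∀ (f : G) (h : {h : G // IsConj g h}),
      (V h).map (ρ f) = V (conjClassConj g f h)) :
    -- the centralizer C of g preserves V_g …
    (∀ c ∈ Subgroup.centralizer {g},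
      (V ⟨g, IsConj.refl g⟩).map (ρ c) = V ⟨g, IsConj.refl g⟩) ∧
    -- … and V_g ↪ U ↠ U_G induces an isomorphism (V_g)_C ≅ U_G of coinvariants:
    (∃ e :
      (↥(V ⟨g, IsConj.refl g⟩) ⧸
        (Submodule.span ℂ {x : U | ∃ c ∈ Subgroup.centralizer {g},
            ∃ v ∈ V ⟨g, IsConj.refl g⟩, x = ρ c v - v}).comap
          (V ⟨g, IsConj.refl g⟩).subtype) ≃ₗ[ℂ]
      (U ⧸ Submodule.span ℂ {x : U | ∃ (f : G) (u : U), x = ρ f u - u}),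
      ∀ v : ↥(V ⟨g, IsConj.refl g⟩),
        e (Submodule.Quotient.mk v) = Submodule.Quotient.mk (v : U)) := by
  classical
  have hρV (f : G) (h : {h : G // IsConj g h}) : ∀ u ∈ V h, ρ f u ∈ V (f • h) :=
    fun _ hu => hConj f h ▸ mem_map_of_mem hu
  refine ⟨fun c hc => (hConj c _).trans (congrArg V ?_), ?_⟩
  · rw [← stabilizer_conjClass_self_eq_centralizer, mem_stabilizer_iff] at hc
    exact hc
  have hV := DirectSum.isInternal_submodule_of_iSupIndep_of_iSup_eq_top hIndep hSpan
  refine ⟨(quotEquivOfEq _ _ ?_).trans ((stabilizerSummandCoinvariantsLEquiv hρV _ hV).trans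
    (quotEquivOfEq _ _ (Coinvariants.ker_eq_span ρ))), fun v => rfl⟩
  rw [← stabilizer_conjClass_self_eq_centralizer]
  exact (Coinvariants.ker_subrepresentation_comp_subtype _ _ _ _).symm

theorem coinvariants_of_conjugacy_class_decomposition
    (G : Type) [Group G] [Finite G] (g : G)
    (U : Type) [AddCommGroup U] [Module ℂ U] (ρ : Representation ℂ G U)
    -- a direct sum decomposition U = ⊕_{h ∈ [g]} V_h …
    (V : {h : G // IsConj g h} → Submodule ℂ U)
    (hIndep : iSupIndep V)
    (hSpan : ⨆ h : {h : G // IsConj g h}, V h = ⊤)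
    -- … permuted by G according to conjugation: ρ(f)(V_h) = V_{f h f⁻¹}
    (hConj : ∀ (f : G) (h : {h : G // IsConj g h}),
      (V h).map (ρ f) = V (conjClassConj g f h)) :
    -- the centralizer C of g preserves V_g …
    (∀ c ∈ Subgroup.centralizer {g},
      (V ⟨g, IsConj.refl g⟩).map (ρ c) = V ⟨g, IsConj.refl g⟩) ∧
    -- … and V_g ↪ U ↠ U_G induces an isomorphism (V_g)_C ≅ U_G of coinvariants:
    (∃ e :
      (↥(V ⟨g, IsConj.refl g⟩) ⧸
        (Submodule.span ℂ {x : U | ∃ c ∈ Subgroup.centralizer {g},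
            ∃ v ∈ V ⟨g, IsConj.refl g⟩, x = ρ c v - v}).comap
          (V ⟨g, IsConj.refl g⟩).subtype) ≃ₗ[ℂ]
      (U ⧸ Submodule.span ℂ {x : U | ∃ (f : G) (u : U), x = ρ f u - u}),
      ∀ v : ↥(V ⟨g, IsConj.refl g⟩),
        e (Submodule.Quotient.mk v) = Submodule.Quotient.mk (v : U)) :=
  coinvariants_of_conjugacy_class_decomposition_general G g U ρ V hIndep hSpan hConj
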